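/- Let n ≥ 2, t ≥ 1, d ≥ 1, let f_1, …, f_d ∈ Harm_t(ℝ^n), and let Z : ℝ → ℝ be a polynomial function satisfying the addition formula Z(⟨x, y⟩) = ∑_{i=1}^d f_i(x) f_i(y) for all x, y ∈ S^{n-1}. Put c = −min_{−1 ≤ s ≤ 1} Z(s) and assume c > 0. Then every spherical design X of harmonic index t on S^{n-1} satisfies |X| ≥ 1 + Z(1)/c. (Taking (f_i) to be an orthonormal basis of Harm_t(ℝ^n) restricted to S^{n-1}, Z is the normalized Gegenbauer polynomial Q_{n,t} with Z(1) = C(n+t−1, t) − C(n+t−3, t−2), and one recovers the Fisher-type bound |X| ≥ 1 + (C(n+t−1,t) − C(n+t−3,t−2))/c_{n,t}.) -/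
import Mathlib


open scoped BigOperators Classical

/-- The Laplacian `∑ i, ∂²/∂xᵢ²` of a multivariate polynomial. -/
noncomputable def mvLaplacian {n : ℕ} (f : MvPolynomial (Fin n) ℝ) : MvPolynomial (Fin n) ℝ :=
  ∑ i, MvPolynomial.pderiv i (MvPolynomial.pderiv i f)

/-- A finite nonempty subset `X` of the unit sphere `S^{n-1} ⊆ ℝ^n` is a spherical design of
harmonic index `t` if `∑_{x ∈ X} f(x) = 0` for every harmonic homogeneous polynomial `f`
of degree `t`. -/
def IsHarmonicIndexDesign (n t : ℕ) (X : Finset (Fin n → ℝ)) : Prop :=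
  X.Nonempty ∧ (∀ x ∈ X, ∑ i, x i ^ 2 = 1) ∧
    ∀ f : MvPolynomial (Fin n) ℝ, mvLaplacian f = 0 → f.IsHomogeneous t →
      ∑ x ∈ X, MvPolynomial.eval x f = 0

/-- Fisher-type lower bound. If `Z` is a polynomial satisfying the addition
formula `Z(⟨x,y⟩) = ∑ i, fᵢ(x) fᵢ(y)` on the sphere for harmonic homogeneous polynomials
`f₁, …, f_d` of degree `t`, and `c = -min_{[-1,1]} Z > 0`, then every spherical design of
harmonic index `t` on `S^{n-1}` satisfies `|X| ≥ 1 + Z(1)/c`. -/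
theorem fisher_type_bound (n t d : ℕ) (hn : 2 ≤ n) (ht : 1 ≤ t) (hd : 1 ≤ d)
    (f : Fin d → MvPolynomial (Fin n) ℝ)
    (hharm : ∀ i, mvLaplacian (f i) = 0 ∧ (f i).IsHomogeneous t)
    (Z : Polynomial ℝ)
    (hZ : ∀ x y : Fin n → ℝ, ∑ i, x i ^ 2 = 1 → ∑ i, y i ^ 2 = 1 →
      Z.eval (∑ i, x i * y i) = ∑ i, MvPolynomial.eval x (f i) * MvPolynomial.eval y (f i))
    (c : ℝ) (hc : IsLeast (Z.eval '' Set.Icc (-1 : ℝ) 1) (-c)) (hcpos : 0 < c)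
    (X : Finset (Fin n → ℝ)) (hX : IsHarmonicIndexDesign n t X) :
    (X.card : ℝ) ≥ 1 + Z.eval 1 / c := by
  obtain ⟨hne, hsph, hdes⟩ := hX
  have hzero : ∀ i, ∑ x ∈ X, MvPolynomial.eval x (f i) = 0 :=
    fun i => hdes _ (hharm i).1 (hharm i).2
  -- the double sum vanishes
  have hS : ∑ x ∈ X, ∑ y ∈ X, Z.eval (∑ j, x j * y j) = 0 := by
    apply Finset.sum_eq_zero
    intro x hx
    calc ∑ y ∈ X, Z.eval (∑ j, x j * y j)
        = ∑ y ∈ X, ∑ i, MvPolynomial.eval x (f i) * MvPolynomial.eval y (f i) :=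
          Finset.sum_congr rfl fun y hy => hZ x y (hsph x hx) (hsph y hy)
      _ = ∑ i, ∑ y ∈ X, MvPolynomial.eval x (f i) * MvPolynomial.eval y (f i) :=
          Finset.sum_comm
      _ = ∑ i, MvPolynomial.eval x (f i) * ∑ y ∈ X, MvPolynomial.eval y (f i) := by
          simp [Finset.mul_sum]
      _ = 0 := by simp [hzero]
  -- off-diagonal terms are ≥ -c
  have hlb : ∀ x ∈ X, ∀ y ∈ X, -c ≤ Z.eval (∑ j, x j * y j) := by
    intro x hx y hy
    apply hc.2
    refine ⟨∑ j, x j * y j, ?_, rfl⟩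
    have hsq : (∑ j, x j * y j) ^ 2 ≤ 1 := by
      have h2 := Finset.sum_mul_sq_le_sq_mul_sq Finset.univ x y
      rw [hsph x hx, hsph y hy] at h2
      simpa using h2
    exact abs_le.mp ((sq_le_one_iff_abs_le_one _).mp hsq)
  set N : ℝ := (X.card : ℝ) with hN
  have hN1 : (1 : ℝ) ≤ N := by
    have : 1 ≤ X.card := Finset.card_pos.mpr hne
    rw [hN]; exact_mod_cast this
  -- each row sum is ≥ Z(1) - c*(N-1)
  have hrow : ∀ x ∈ X, Z.eval 1 - c * (N - 1) ≤ ∑ y ∈ X, Z.eval (∑ j, x j * y j) := by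
    intro x hx
    have hsplit : ∑ y ∈ X, Z.eval (∑ j, x j * y j)
        = Z.eval (∑ j, x j * x j) + ∑ y ∈ X.erase x, Z.eval (∑ j, x j * y j) :=
      (Finset.add_sum_erase X _ hx).symm
    have hdiag : (∑ j, x j * x j) = 1 := by
      rw [← hsph x hx]; exact Finset.sum_congr rfl fun j _ => (sq (x j)).symm
    have herase : (X.erase x).card • (-c) ≤ ∑ y ∈ X.erase x, Z.eval (∑ j, x j * y j) :=
      Finset.card_nsmul_le_sum _ _ _ fun y hy => hlb x hx y (Finset.mem_of_mem_erase hy)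
    have hcard : ((X.erase x).card : ℝ) = N - 1 := by
      rw [Finset.card_erase_of_mem hx, hN]
      have : 1 ≤ X.card := Finset.card_pos.mpr ⟨x, hx⟩
      push_cast [this]
      ring
    rw [hsplit, hdiag]
    have : ((X.erase x).card : ℝ) * (-c) ≤ ∑ y ∈ X.erase x, Z.eval (∑ j, x j * y j) := by
      simpa [nsmul_eq_mul] using herase
    rw [hcard] at this
    linarith
  -- combine
  have htotal : N * (Z.eval 1 - c * (N - 1)) ≤ 0 := by
    have := Finset.card_nsmul_le_sum X _ _ hrow
    rw [hS] at this
    simpa [nsmul_eq_mul, hN, mul_comm] using this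
  have hkey : Z.eval 1 ≤ c * (N - 1) := by nlinarith
  have hdiv : Z.eval 1 / c ≤ N - 1 :=
    (div_le_iff₀ hcpos).mpr (by linarith [mul_comm c (N - 1)])
  linarith
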